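/- arXiv:2209.06808 — 5 statements merged into one kernel-verified Lean document; each statement's English description precedes it below -/
import Mathlib

section
/- For all complex x, all natural numbers n ≥ 1 and all integers i with 0 ≤ i < n, the generalized Laguerre polynomials satisfy the duality ((-x)^i / i!) · L_n^{(i-n)}(x) = ((-x)^n / n!) · L_i^{(n-i)}(x). -/
open Finset

/-- Generalized binomial coefficient `C(r, m) = r(r-1)⋯(r-m+1)/m!`. -/
noncomputable def genChoose (r : ℂ) (m : ℕ) : ℂ :=
  (∏ j ∈ range m, (r - j)) / (Nat.factorial m : ℂ)

/-- The generalized Laguerre polynomial as a function,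
`L_n^{(α)}(x) = ∑_{k=0}^n (-1)^k C(n+α, n-k) x^k / k!`. -/
noncomputable def laguerreFn (n : ℕ) (α : ℂ) (x : ℂ) : ℂ :=
  ∑ k ∈ range (n + 1), (-1) ^ k * genChoose (α + n) (n - k) * x ^ k / (Nat.factorial k : ℂ)

lemma prod_sub_cast (n : ℕ) : ∀ m : ℕ, ∏ j ∈ range m, ((n : ℂ) - j) = (n.descFactorial m : ℂ) := by
  intro m
  induction m with
  | zero => simp
  | succ m ih =>
    rw [prod_range_succ, ih, Nat.descFactorial_succ, Nat.cast_mul]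
    rcases le_or_gt m n with h | h
    · rw [Nat.cast_sub h]; ring
    · rw [Nat.descFactorial_eq_zero_iff_lt.2 h]; simp

lemma genChoose_natCast (n m : ℕ) : genChoose (n : ℂ) m = (n.choose m : ℂ) := by
  rw [genChoose, prod_sub_cast, Nat.descFactorial_eq_factorial_mul_choose, Nat.cast_mul,
    mul_comm, mul_div_assoc, div_self (by exact_mod_cast m.factorial_ne_zero), mul_one]

/-- Duality of generalized Laguerre polynomials:
`((-x)^i / i!) L_n^{(i-n)}(x) = ((-x)^n / n!) L_i^{(n-i)}(x)` for `0 ≤ i < n`. -/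
theorem laguerre_duality (x : ℂ) (n i : ℕ) (hn : 1 ≤ n) (hi : i < n) :
    (-x) ^ i / (Nat.factorial i : ℂ) * laguerreFn n ((i : ℂ) - (n : ℂ)) x
      = (-x) ^ n / (Nat.factorial n : ℂ) * laguerreFn i ((n : ℂ) - (i : ℂ)) x := by
  have hin : i ≤ n := hi.le
  unfold laguerreFn
  rw [sub_add_cancel, sub_add_cancel]
  simp_rw [genChoose_natCast]
  rw [range_eq_Ico, ← Finset.sum_Ico_consecutive _ (Nat.zero_le (n - i)) (by omega : n - i ≤ n + 1)]
  have hz : ∑ k ∈ Ico 0 (n - i), (-1:ℂ)^k * (i.choose (n-k) : ℂ) * x^k / (k.factorial : ℂ) = 0 := by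
    apply Finset.sum_eq_zero
    intro k hk
    rw [mem_Ico] at hk
    rw [Nat.choose_eq_zero_of_lt (by omega)]
    simp
  rw [hz, zero_add, Finset.sum_Ico_eq_sum_range,
    (by omega : n + 1 - (n - i) = i + 1), mul_sum, mul_sum]
  apply Finset.sum_congr rfl
  intro k hk
  rw [mem_range] at hk
  obtain ⟨c, rfl⟩ : ∃ c, i = k + c := ⟨i - k, by omega⟩
  obtain ⟨d, rfl⟩ : ∃ d, n = k + c + d := ⟨n - (k + c), by omega⟩
  rw [(by omega : k + c + d - (k + c) + k = d + k),
    (by omega : k + c + d - (d + k) = c),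
    (by omega : k + c - k = c),
    Nat.cast_choose ℂ (show c ≤ k + c by omega),
    Nat.cast_choose ℂ (show c ≤ k + c + d by omega),
    (by omega : k + c - c = k),
    (by omega : k + c + d - c = k + d)]
  have f1 : ((k + c).factorial : ℂ) ≠ 0 := by exact_mod_cast Nat.factorial_ne_zero _
  have f2 : ((k + c + d).factorial : ℂ) ≠ 0 := by exact_mod_cast Nat.factorial_ne_zero _
  have f3 : (c.factorial : ℂ) ≠ 0 := by exact_mod_cast Nat.factorial_ne_zero _
  have f4 : (k.factorial : ℂ) ≠ 0 := by exact_mod_cast Nat.factorial_ne_zero _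
  have f5 : ((d + k).factorial : ℂ) ≠ 0 := by exact_mod_cast Nat.factorial_ne_zero _
  have f6 : ((k + d).factorial : ℂ) ≠ 0 := by exact_mod_cast Nat.factorial_ne_zero _
  field_simp
  ring
end

section
/- Let θ be a positive integer. Then the polynomial G(t) = Σ_{k=1}^n S(n,k) θ(θ-1)···(θ-k+1) t^k / θ^n has only real, nonpositive zeros. -/
/-!
Write `F_n(x) = ∑ₖ S(n,k) θ(θ-1)⋯(θ-k+1) xᵏ = θⁿ G(x)`. The Möbius substitution `x = y/(1+y)`
turns it into `Q_n(y) = (1+y)^θ F_n(y/(1+y)) = ∑ₖ S(n,k) θ(θ-1)⋯(θ-k+1) yᵏ (1+y)^(θ-k)`, and the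
Stirling recurrence says exactly that `Q_{n+1} = y Q_n'`, with `Q_0 = (1+y)^θ`. By Rolle, `y d/dy`
preserves real-rootedness, so every `Q_n` splits over `ℝ`; its linear factors `y - r` come back as
linear factors `(1+r)x - r` of `F_n`, which therefore splits as well. Since `F_n` has nonnegative
coefficients and is positive on `(0, ∞)`, all its roots are nonpositive.
-/

open Finset Polynomial

def stirling2 : ℕ → ℕ → ℕ
  | 0, 0 => 1
  | 0, _ + 1 => 0
  | _ + 1, 0 => 0
  | n + 1, k + 1 => (k + 1) * stirling2 n (k + 1) + stirling2 n k

theorem Polynomial.Splits.derivative {p : ℝ[X]} (hp : p.Splits) : (derivative p).Splits := by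
  rw [splits_iff_card_roots] at hp ⊢
  refine le_antisymm (card_roots' _) ?_
  rcases eq_or_ne p.natDegree 0 with hp0 | hp0
  · simp [derivative_of_natDegree_zero hp0]
  · have := natDegree_derivative_lt hp0
    have := card_roots_le_derivative p
    omega

theorem eval_sum_C_mul_X_pow_eq_mul_eval_sum_mul_one_add_X_pow {K : Type*} [Field K] (θ : ℕ)
    (c : ℕ → K) {x : K} (hx : x ≠ 1) :
    (∑ k ∈ range (θ + 1), C (c k) * X ^ k).eval x =
      (1 - x) ^ θ * (∑ k ∈ range (θ + 1), C (c k) * X ^ k * (1 + X) ^ (θ - k)).eval (x / (1 - x)) := by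
  have hx' : 1 - x ≠ 0 := sub_ne_zero.mpr hx.symm
  have hinv : 1 + x / (1 - x) = (1 - x)⁻¹ := by field_simp; ring
  simp only [eval_finsetSum, mul_sum]
  refine sum_congr rfl fun k hk => ?_
  simp only [eval_mul, eval_C, eval_pow, eval_X, eval_add, eval_one, hinv,
    ← pow_mul_pow_sub (1 - x) (Nat.lt_succ_iff.mp (mem_range.mp hk)), div_pow, inv_pow]
  field_simp

theorem splits_sum_C_mul_X_pow_of_splits_sum_mul_one_add_X_pow {K : Type*} [Field K] [Infinite K]
    {θ : ℕ} {c : ℕ → K}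
    (h : (∑ k ∈ range (θ + 1), C (c k) * X ^ k * (1 + X) ^ (θ - k)).Splits) :
    (∑ k ∈ range (θ + 1), C (c k) * X ^ k).Splits := by
  set Q := ∑ k ∈ range (θ + 1), C (c k) * X ^ k * (1 + X) ^ (θ - k)
  have hQ : Q.roots.card ≤ θ := by
    refine (card_roots' Q).trans (natDegree_sum_le_of_forall_le _ _ fun k hk => ?_)
    have hk : k ≤ θ := Nat.lt_succ_iff.mp (mem_range.mp hk)
    compute_degree
    omega
  have hfactor : ∑ k ∈ range (θ + 1), C (c k) * X ^ k =
      C Q.leadingCoeff * (1 - X) ^ (θ - Q.roots.card) *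
        (Q.roots.map fun r => C (1 + r) * X - C r).prod := by
    refine eq_of_infinite_eval_eq _ _ ((Set.finite_singleton (1 : K)).infinite_compl.mono ?_)
    intro x hx
    have hx' : 1 - x ≠ 0 := sub_ne_zero.mpr (Ne.symm hx)
    rw [Set.mem_ofPred_eq, eval_sum_C_mul_X_pow_eq_mul_eval_sum_mul_one_add_X_pow θ c hx,
      h.eval_eq_prod_roots]
    simp only [eval_mul, eval_C, eval_pow, eval_sub, eval_one, eval_X, eval_multiset_prod,
      Multiset.map_map, Function.comp_def]
    have hprod : (Q.roots.map fun r => (1 + r) * x - r).prod =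
        (1 - x) ^ Q.roots.card * (Q.roots.map fun r => x / (1 - x) - r).prod := by
      rw [← Multiset.prod_replicate, ← Multiset.map_const' Q.roots, ← Multiset.prod_map_mul]
      congr 1
      exact Multiset.map_congr rfl fun r _ => by field_simp; ring
    rw [hprod, ← pow_sub_mul_pow (1 - x) hQ]
    ring
  rw [hfactor]
  refine ((Splits.C _).mul ((Splits.of_natDegree_le_one ?_).pow _)).mul
    (Splits.multisetProd fun f hf => ?_)
  · compute_degree
  · obtain ⟨r, -, rfl⟩ := Multiset.mem_map.mp hf
    exact Splits.of_natDegree_le_one (by compute_degree)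

theorem stirling2_eq_zero_of_lt : ∀ {n k : ℕ}, n < k → stirling2 n k = 0
  | 0, _ + 1, _ => rfl
  | n + 1, k + 1, h => by
    simp [stirling2, stirling2_eq_zero_of_lt (by omega : n < k + 1),
      stirling2_eq_zero_of_lt (by omega : n < k)]

theorem stirling2_succ_one (n : ℕ) : stirling2 (n + 1) 1 = 1 := by
  induction n with
  | zero => rfl
  | succ n ih => rw [stirling2, ih]; rfl

-- The number of maps from an `n`-set to a `θ`-set whose image has `k` elements.
def occupancyCount (θ n k : ℕ) : ℕ := stirling2 n k * θ.descFactorial k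

theorem occupancyCount_succ_succ (θ n k : ℕ) :
    occupancyCount θ (n + 1) (k + 1) =
      (k + 1) * occupancyCount θ n (k + 1) + (θ - k) * occupancyCount θ n k := by
  simp only [occupancyCount, stirling2, Nat.descFactorial_succ]
  ring

-- `(1 + y)^θ F_n(y / (1 + y))`, which equals `∑ⱼ (θ choose j) jⁿ yʲ`.
noncomputable def occupancyPolyMobius (R : Type*) [CommSemiring R] (θ n : ℕ) : R[X] :=
  ∑ k ∈ range (θ + 1), C (occupancyCount θ n k : R) * X ^ k * (1 + X) ^ (θ - k)

section
variable {R : Type*} [CommSemiring R]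

theorem X_mul_derivative_X_pow_mul_one_add_X_pow (k m : ℕ) :
    X * derivative (X ^ k * (1 + X) ^ m : R[X]) =
      C (k : R) * X ^ k * (1 + X) ^ m + C (m : R) * X ^ (k + 1) * (1 + X) ^ (m - 1) := by
  rcases k with _ | k <;>
  simp only [derivative_mul, derivative_pow, derivative_add, derivative_one, derivative_X,
    map_natCast, Nat.cast_zero, map_zero, add_tsub_cancel_right] <;>
  ring

theorem occupancyPolyMobius_zero (θ : ℕ) : occupancyPolyMobius R θ 0 = (1 + X) ^ θ := by
  rw [occupancyPolyMobius, sum_eq_single 0]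
  · simp [occupancyCount, stirling2]
  · rintro (_ | k) _ hk
    · exact absurd rfl hk
    · simp [occupancyCount, stirling2]
  · simp

theorem occupancyPolyMobius_succ (θ n : ℕ) :
    occupancyPolyMobius R θ (n + 1) = X * derivative (occupancyPolyMobius R θ n) := by
  set T : ℕ → R[X] := fun k => X ^ k * (1 + X) ^ (θ - k) with hT
  have hderiv : X * derivative (occupancyPolyMobius R θ n) =
      ∑ k ∈ range (θ + 1), C ((k * occupancyCount θ n k : ℕ) : R) * T k +
      ∑ k ∈ range (θ + 1), C (((θ - k) * occupancyCount θ n k : ℕ) : R) * T (k + 1) := by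
    simp only [occupancyPolyMobius, derivative_sum, mul_sum, ← sum_add_distrib]
    refine sum_congr rfl fun k _ => ?_
    rw [mul_assoc, derivative_C_mul, mul_left_comm, X_mul_derivative_X_pow_mul_one_add_X_pow]
    simp only [hT, Nat.sub_sub, Nat.cast_mul, C_mul]
    ring
  have hfirst : ∑ k ∈ range (θ + 1), C ((k * occupancyCount θ n k : ℕ) : R) * T k =
      ∑ k ∈ range θ, C (((k + 1) * occupancyCount θ n (k + 1) : ℕ) : R) * T (k + 1) := by
    simp [sum_range_succ']
  have hsecond : ∑ k ∈ range (θ + 1), C (((θ - k) * occupancyCount θ n k : ℕ) : R) * T (k + 1) =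
      ∑ k ∈ range θ, C (((θ - k) * occupancyCount θ n k : ℕ) : R) * T (k + 1) := by
    simp [sum_range_succ]
  rw [hderiv, hfirst, hsecond, ← sum_add_distrib, occupancyPolyMobius, sum_range_succ',
    occupancyCount, stirling2, zero_mul, Nat.cast_zero, map_zero, zero_mul, zero_mul, add_zero]
  refine sum_congr rfl fun k _ => ?_
  simp only [hT, occupancyCount_succ_succ, Nat.cast_add, Nat.cast_mul, map_add, map_mul]
  ring

end

theorem occupancyPolyMobius_splits (θ n : ℕ) : (occupancyPolyMobius ℝ θ n).Splits := by
  induction n with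
  | zero =>
    rw [occupancyPolyMobius_zero, add_comm, ← C_1]
    exact (Splits.X_add_C 1).pow θ
  | succ n ih =>
    rw [occupancyPolyMobius_succ]
    exact Splits.X.mul ih.derivative

noncomputable def occupancyPoly (θ n : ℕ) : ℝ[X] :=
  ∑ k ∈ Icc 1 n, C (occupancyCount θ n k : ℝ) * X ^ k

theorem occupancyPoly_eq_sum_range (θ : ℕ) {n : ℕ} (hn : 1 ≤ n) :
    occupancyPoly θ n = ∑ k ∈ range (θ + 1), C (occupancyCount θ n k : ℝ) * X ^ k := by
  have hsum (s : Finset ℕ) (hs : s ⊆ range (n + θ + 1))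
      (hzero : ∀ k ∈ range (n + θ + 1), k ∉ s → occupancyCount θ n k = 0) :
      ∑ k ∈ s, C (occupancyCount θ n k : ℝ) * X ^ k =
        ∑ k ∈ range (n + θ + 1), C (occupancyCount θ n k : ℝ) * X ^ k :=
    sum_subset hs fun k hk hks => by simp [hzero k hk hks]
  have hIcc : Icc 1 n ⊆ range (n + θ + 1) := fun k hk => by
    simp only [mem_Icc, mem_range] at hk ⊢; omega
  have hrange : range (θ + 1) ⊆ range (n + θ + 1) := range_subset_range.mpr (by omega)
  rw [occupancyPoly, hsum _ hIcc fun k _ hk => ?_, hsum _ hrange fun k _ hk => ?_]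
  · simp only [mem_range, not_lt] at hk
    simp [occupancyCount, Nat.descFactorial_eq_zero_iff_lt.mpr (by omega : θ < k)]
  · simp only [mem_Icc, not_and_or, not_le] at hk
    rcases hk with hk | hk
    · obtain ⟨m, rfl⟩ : ∃ m, n = m + 1 := ⟨n - 1, by omega⟩
      simp [occupancyCount, Nat.lt_one_iff.mp hk, stirling2]
    · simp [occupancyCount, stirling2_eq_zero_of_lt hk]

theorem occupancyPoly_eval_pos {θ n : ℕ} (hn : 1 ≤ n) (hθ : 1 ≤ θ) {x : ℝ} (hx : 0 < x) :
    0 < (occupancyPoly θ n).eval x := by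
  rw [occupancyPoly, eval_finsetSum]
  refine sum_pos' (fun k _ => by simp only [eval_mul, eval_C, eval_pow, eval_X]; positivity)
    ⟨1, mem_Icc.mpr ⟨le_rfl, hn⟩, ?_⟩
  obtain ⟨m, rfl⟩ : ∃ m, n = m + 1 := ⟨n - 1, by omega⟩
  simp only [occupancyCount, stirling2_succ_one, Nat.descFactorial_one, one_mul, eval_mul, eval_C,
    eval_X, pow_one]
  positivity

theorem occupancyPoly_splits (θ : ℕ) {n : ℕ} (hn : 1 ≤ n) : (occupancyPoly θ n).Splits := by
  rw [occupancyPoly_eq_sum_range θ hn]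
  exact splits_sum_C_mul_X_pow_of_splits_sum_mul_one_add_X_pow (occupancyPolyMobius_splits θ n)

/-- For a positive integer `θ`, the generating polynomial
`G(t) = ∑_{k=1}^n S(n,k) θ(θ-1)⋯(θ-k+1) t^k / θ^n` has only real nonpositive zeros. -/
theorem stirlingSibuya_pgf_real_rooted (n θ : ℕ) (hn : 1 ≤ n) (hθ : 1 ≤ θ)
    (G : Polynomial ℂ)
    (hG : G = ∑ k ∈ Icc 1 n,
        Polynomial.C ((stirling2 n k : ℂ) * (∏ j ∈ range k, ((θ : ℂ) - j)) / (θ : ℂ) ^ n)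
          * X ^ k) :
    ∀ z : ℂ, G.eval z = 0 → ∃ r : ℝ, r ≤ 0 ∧ z = (r : ℂ) := by
  intro z hz
  have hθn : (θ : ℂ) ^ n ≠ 0 := pow_ne_zero _ (Nat.cast_ne_zero.mpr (by omega))
  have hG' : G = C ((θ : ℂ) ^ n)⁻¹ * (occupancyPoly θ n).map (algebraMap ℝ ℂ) := by
    rw [hG, occupancyPoly, Polynomial.map_sum, mul_sum]
    refine sum_congr rfl fun k _ => ?_
    simp [occupancyCount, ← descPochhammer_eval_eq_prod_range, descPochhammer_eval_eq_descFactorial,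
      div_eq_inv_mul, mul_assoc]
  have hF : occupancyPoly θ n ≠ 0 := fun h =>
    (occupancyPoly_eval_pos hn hθ one_pos).ne' (by simp [h])
  have hz' : z ∈ ((occupancyPoly θ n).map (algebraMap ℝ ℂ)).roots := by
    rw [mem_roots (Polynomial.map_ne_zero hF), IsRoot]
    rw [hG', eval_mul, eval_C] at hz
    exact (mul_eq_zero.mp hz).resolve_left (inv_ne_zero hθn)
  rw [(occupancyPoly_splits θ hn).roots_map, Multiset.mem_map] at hz'
  obtain ⟨r, hr, rfl⟩ := hz'
  exact ⟨r, not_lt.mp fun hr0 => (occupancyPoly_eval_pos hn hθ hr0).ne' (isRoot_of_mem_roots hr), rfl⟩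
end

section
/- If a nonnegative-integer-valued random variable X has a probability generating function that is a polynomial with only real (hence nonpositive) zeros, then X is distributed as a sum of independent Bernoulli random variables. In particular, the number of occupied boxes when n balls are allocated independently and uniformly among θ boxes (θ a positive integer) is a sum of independent Bernoulli random variables. -/
open Finset Polynomial MeasureTheory ProbabilityTheory

lemma aux_pi_inter {d : ℕ} (μb : Fin d → Measure Bool) [∀ j, IsProbabilityMeasure (μb j)]
    (sets : Fin d → Set Bool) (T : Finset (Fin d)) :
    Measure.pi μb (⋂ i ∈ T, (fun ω : Fin d → Bool => ω i) ⁻¹' sets i) = ∏ i ∈ T, μb i (sets i) := by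
  have h1 : (⋂ i ∈ T, (fun ω : Fin d → Bool => ω i) ⁻¹' sets i)
      = Set.pi Set.univ (fun i => if i ∈ T then sets i else Set.univ) := by
    ext ω
    simp only [Set.mem_iInter, Set.mem_preimage, Set.mem_pi, Set.mem_univ, true_implies]
    constructor
    · intro h i
      by_cases hi : i ∈ T
      · simpa [hi] using h i hi
      · simp [hi]
    · intro h i hi
      have := h i
      simpa [hi] using this
  rw [h1, Measure.pi_pi]
  rw [← Finset.prod_subset (Finset.subset_univ T) (fun i _ hi => by simp only [hi, if_false, measure_univ])]
  exact Finset.prod_congr rfl fun i hi => by simp [hi]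

lemma aux_iIndep_coord {d : ℕ} (μb : Fin d → Measure Bool) [∀ j, IsProbabilityMeasure (μb j)] :
    iIndepFun
      (fun j (ω : Fin d → Bool) => ω j) (Measure.pi μb) := by
  rw [iIndepFun_iff_measure_inter_preimage_eq_mul]
  intro S sets _
  rw [aux_pi_inter μb sets S]
  refine Finset.prod_congr rfl fun i _ => ?_
  have := aux_pi_inter μb sets {i}
  simpa using this.symm

lemma aux_splits (G : Polynomial ℝ)
    (hroots : ∀ z : ℂ, Polynomial.aeval z G = 0 → ∃ r : ℝ, r ≤ 0 ∧ z = (r : ℂ)) :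
    G.Splits := by
  refine Polynomial.Splits.of_splits_map (algebraMap ℝ ℂ) (IsAlgClosed.splits _) ?_
  intro a ha
  have h0 : Polynomial.aeval a G = 0 := by
    have := Polynomial.isRoot_of_mem_roots ha
    simpa [Polynomial.aeval_def, Polynomial.IsRoot, Polynomial.eval_map] using this
  obtain ⟨r, _, hr⟩ := hroots a h0
  exact ⟨r, hr.symm⟩

lemma aux_prod {M : Type*} [CommMonoid M] (s : Multiset ℝ) (f : ℝ → M) :
    (s.map f).prod = ∏ j : Fin s.toList.length, f (s.toList.get j) := by
  have h1 : (s.toList.map f).prod = ∏ j : Fin s.toList.length, f (s.toList.get j) := by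
    conv_lhs => rw [← List.ofFn_get s.toList, List.map_ofFn, List.prod_ofFn]
    rfl
  rw [← h1]
  conv_lhs => rw [← Multiset.coe_toList s]
  rw [Multiset.map_coe, Multiset.prod_coe]



/-- If a nonnegative-integer-valued random variable has a probability generating function
which is a polynomial with only real (hence nonpositive) zeros, then it is distributed as a
sum of independent Bernoulli (`{0,1}`-valued) random variables. -/
theorem sum_of_bernoullis_of_real_rooted_pgf
    {Ω : Type*} [MeasurableSpace Ω] (μ : Measure Ω) [IsProbabilityMeasure μ]
    (X : Ω → ℕ) (hX : Measurable X)
    (G : Polynomial ℝ)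
    (hcoeff : ∀ k : ℕ, G.coeff k = (μ (X ⁻¹' {k})).toReal)
    (hroots : ∀ z : ℂ, Polynomial.aeval z G = 0 → ∃ r : ℝ, r ≤ 0 ∧ z = (r : ℂ)) :
    ∃ (Ω' : Type) (_ : MeasurableSpace Ω') (ν : Measure Ω') (_ : IsProbabilityMeasure ν)
      (d : ℕ) (Y : Fin d → Ω' → ℕ),
        (∀ j, Measurable (Y j)) ∧
        (∀ j ω, Y j ω ≤ 1) ∧
        iIndepFun Y ν ∧
        Measure.map X μ = Measure.map (fun ω => ∑ j, Y j ω) ν := by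
  classical
  have hfin : ∀ k : ℕ, μ (X ⁻¹' {k}) ≠ ⊤ := fun k => measure_ne_top μ _
  have hμofReal : ∀ k, μ (X ⁻¹' {k}) = ENNReal.ofReal (G.coeff k) := by
    intro k; rw [hcoeff k, ENNReal.ofReal_toReal (hfin k)]
  have hzero : ∀ k, G.natDegree < k → μ (X ⁻¹' {k}) = 0 := by
    intro k hk
    rw [hμofReal k, Polynomial.coeff_eq_zero_of_natDegree_lt hk, ENNReal.ofReal_zero]
  have hsum1 : ∑ k ∈ Finset.range (G.natDegree + 1), μ (X ⁻¹' {k}) = 1 := by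
    have hd : Pairwise (Function.onFun Disjoint fun k : ℕ => X ⁻¹' {k}) := by
      intro a b hab
      refine Set.disjoint_left.mpr (fun ω ha hb => hab ?_)
      simp only [Set.mem_preimage, Set.mem_singleton_iff] at ha hb
      rw [← ha, hb]
    have hU := measure_iUnion (μ := μ) hd (fun k => hX (measurableSet_singleton k))
    have huniv : (⋃ k : ℕ, X ⁻¹' {k}) = Set.univ := by ext ω; simp
    rw [huniv, measure_univ] at hU
    rw [← tsum_eq_sum (L := SummationFilter.unconditional ℕ) (f := fun k => μ (X ⁻¹' {k}))
      (fun k hk => hzero k (by simpa using hk)), ← hU]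
  have heval1 : G.eval 1 = 1 := by
    rw [Polynomial.eval_eq_sum_range]
    simp only [one_pow, mul_one]
    calc ∑ k ∈ Finset.range (G.natDegree + 1), G.coeff k
        = ∑ k ∈ Finset.range (G.natDegree + 1), (μ (X ⁻¹' {k})).toReal := by
          exact Finset.sum_congr rfl fun k _ => hcoeff k
      _ = (∑ k ∈ Finset.range (G.natDegree + 1), μ (X ⁻¹' {k})).toReal :=
          (ENNReal.toReal_sum (fun k _ => hfin k)).symm
      _ = 1 := by rw [hsum1]; simp
  have hG0 : G ≠ 0 := by intro h; rw [h] at heval1; simp at heval1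
  -- factorization
  have hsplits : G.Splits := aux_splits G hroots
  have hfact := hsplits.eq_prod_roots
  set l : List ℝ := G.roots.toList with hl
  set d : ℕ := l.length with hd
  set r : Fin d → ℝ := fun j => l.get j with hr
  have hmem : ∀ j, r j ∈ G.roots := by
    intro j
    rw [← Multiset.mem_toList]
    exact List.get_mem l j
  have hrneg : ∀ j, r j ≤ 0 := by
    intro j
    have hroot : G.eval (r j) = 0 := (Polynomial.mem_roots hG0).mp (hmem j)
    have haev : Polynomial.aeval ((r j : ℂ)) G = 0 := by
      rw [show ((r j : ℂ)) = algebraMap ℝ ℂ (r j) from rfl,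
        Polynomial.aeval_algebraMap_apply_eq_algebraMap_eval, hroot]
      simp
    obtain ⟨r', hr', he⟩ := hroots _ haev
    have : r j = r' := by exact_mod_cast he
    linarith
  have h1r : ∀ j, (1:ℝ) ≤ 1 - r j := fun j => by linarith [hrneg j]
  set p : Fin d → ℝ := fun j => (1 - r j)⁻¹ with hp
  have hp0 : ∀ j, 0 < p j := fun j => inv_pos.mpr (by linarith [h1r j])
  have hp1 : ∀ j, p j ≤ 1 := fun j => inv_le_one_of_one_le₀ (h1r j)
  have hpr : ∀ j, p j * (1 - r j) = 1 := fun j => inv_mul_cancel₀ (by linarith [h1r j])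
  have hfact' : G = Polynomial.C G.leadingCoeff * ∏ j, (Polynomial.X - Polynomial.C (r j)) :=
    hfact.trans (congrArg (Polynomial.C G.leadingCoeff * ·) (aux_prod G.roots fun a => Polynomial.X - Polynomial.C a))
  have heval1' : G.leadingCoeff * ∏ j, (1 - r j) = 1 := by
    have h := heval1
    rw [hfact'] at h
    simpa [Polynomial.eval_prod] using h
  have hA : (∏ j, (1 - r j)) ≠ 0 := by
    refine Finset.prod_ne_zero_iff.mpr fun j _ => by linarith [h1r j]
  have hc : G.leadingCoeff = ∏ j, p j := by
    have hppA : (∏ j, p j) * ∏ j, (1 - r j) = 1 := by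
      rw [← Finset.prod_mul_distrib]
      simp only [hpr]
      exact Finset.prod_const_one
    exact mul_right_cancel₀ hA (heval1'.trans hppA.symm)
  have hQ : (∏ j, (Polynomial.C (p j) * Polynomial.X + Polynomial.C (1 - p j))) = G := by
    have hfac : ∀ j, Polynomial.C (p j) * Polynomial.X + Polynomial.C (1 - p j)
        = Polynomial.C (p j) * (Polynomial.X - Polynomial.C (r j)) := by
      intro j
      have h2 : (1 : ℝ) - p j = -(p j * r j) := by
        have := hpr j; nlinarith [hpr j]
      rw [h2, mul_sub, ← Polynomial.C_mul, map_neg]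
      ring
    calc (∏ j, (Polynomial.C (p j) * Polynomial.X + Polynomial.C (1 - p j)))
        = ∏ j, (Polynomial.C (p j) * (Polynomial.X - Polynomial.C (r j))) := by
          exact Finset.prod_congr rfl fun j _ => hfac j
      _ = Polynomial.C (∏ j, p j) * ∏ j, (Polynomial.X - Polynomial.C (r j)) := by
          rw [Finset.prod_mul_distrib, map_prod]
      _ = G := by rw [← hc, ← hfact']
  have hGcoeff : ∀ k, G.coeff k = ∑ t ∈ (Finset.univ : Finset (Fin d)).powerset,
      (if t.card = k then (∏ j ∈ t, p j) * ∏ j ∈ Finset.univ \ t, (1 - p j) else 0) := by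
    intro k
    conv_lhs => rw [← hQ]
    rw [Finset.prod_add, Polynomial.finset_sum_coeff]
    refine Finset.sum_congr rfl fun t _ => ?_
    have hterm : (∏ j ∈ t, (Polynomial.C (p j) * Polynomial.X)) * ∏ j ∈ Finset.univ \ t, Polynomial.C (1 - p j)
        = Polynomial.C ((∏ j ∈ t, p j) * ∏ j ∈ Finset.univ \ t, (1 - p j)) * Polynomial.X ^ t.card := by
      rw [Finset.prod_mul_distrib, Finset.prod_const, ← map_prod, ← map_prod, map_mul]
      ring
    rw [hterm, Polynomial.coeff_C_mul, Polynomial.coeff_X_pow]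
    by_cases h : t.card = k
    · simp [h]
    · simp [h, Ne.symm h]
  -- measure construction
  have hple : ∀ j, Real.toNNReal (p j) ≤ 1 := fun j => Real.toNNReal_le_one.mpr (hp1 j)
  let μb : Fin d → Measure Bool := fun j => ((PMF.bernoulli _ (hple j)).toMeasure)
  have hPb : ∀ j, IsProbabilityMeasure (μb j) := fun j => PMF.toMeasure.isProbabilityMeasure _
  let ν : Measure (Fin d → Bool) := Measure.pi μb
  have hPν : IsProbabilityMeasure ν := inferInstance
  let Y : Fin d → (Fin d → Bool) → ℕ := fun j ω => if ω j then 1 else 0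
  have hYm : ∀ j, Measurable (Y j) := fun j =>
    (Measurable.of_discrete (f := fun b : Bool => if b then 1 else 0)).comp (measurable_pi_apply j)
  have hw : ∀ (ω : Fin d → Bool) j, (0:ℝ) ≤ (if ω j then p j else 1 - p j) := by
    intro ω j
    by_cases h : ω j <;> simp [h, (hp0 j).le, hp1 j]
  have hsingle : ∀ ω : Fin d → Bool, ν {ω}
      = ENNReal.ofReal (∏ j, (if ω j then p j else 1 - p j)) := by
    intro ω
    rw [← Set.univ_pi_singleton ω, Measure.pi_pi]
    have hb : ∀ j, μb j {ω j} = ENNReal.ofReal (if ω j then p j else 1 - p j) := by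
      intro j
      show (PMF.bernoulli _ (hple j)).toMeasure {ω j} = _
      rw [PMF.toMeasure_apply_singleton _ _ (measurableSet_singleton _), PMF.bernoulli_apply]
      cases hωj : ω j
      · simp only [Bool.cond_false, if_neg (by simp : ¬ (false = true))]
        rw [ENNReal.ofReal_sub _ (hp0 j).le, ENNReal.ofReal_one, ENNReal.coe_sub, ENNReal.coe_one]; rfl
      · simp; rfl
    rw [Finset.prod_congr rfl (fun j _ => hb j), ENNReal.ofReal_prod_of_nonneg (fun j _ => hw ω j)]
  refine ⟨(Fin d → Bool), inferInstance, ν, hPν, d, Y, hYm, ?_, ?_, ?_⟩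
  · intro j ω
    by_cases h : ω j <;> simp [Y, h]
  · exact (aux_iIndep_coord μb).comp (fun j b => if b then 1 else 0)
      (fun j => Measurable.of_discrete)
  · have hSm : Measurable (fun ω : Fin d → Bool => ∑ j, Y j ω) :=
      Finset.measurable_sum _ (fun j _ => hYm j)
    refine Measure.ext_of_singleton fun k => ?_
    rw [Measure.map_apply hX (measurableSet_singleton k),
      Measure.map_apply hSm (measurableSet_singleton k), hμofReal k]
    -- compute RHS
    set F : Finset (Fin d → Bool) := Finset.univ.filter (fun ω => (∑ j, Y j ω) = k) with hF
    have hpre : (fun ω : Fin d → Bool => ∑ j, Y j ω) ⁻¹' {k} = ⋃ ω ∈ F, {ω} := by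
      ext ω
      simp [hF]
    have hνF : ν ((fun ω : Fin d → Bool => ∑ j, Y j ω) ⁻¹' {k}) = ∑ ω ∈ F, ν {ω} := by
      rw [hpre]
      exact measure_biUnion_finset
        (fun a _ b _ hab => by simp [Set.disjoint_left, hab])
        (fun ω _ => measurableSet_singleton ω)
    rw [hνF, Finset.sum_congr rfl (fun ω _ => hsingle ω),
      ← ENNReal.ofReal_sum_of_nonneg (fun ω _ => Finset.prod_nonneg (fun j _ => hw ω j))]
    congr 1
    -- real identity
    rw [hGcoeff k]
    rw [← Finset.sum_filter]
    refine Finset.sum_nbij' (i := fun t (j : Fin d) => decide (j ∈ t))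
      (j := fun ω => Finset.univ.filter (fun j => ω j = true)) ?_ ?_ ?_ ?_ ?_
    · intro t ht
      simp only [Finset.mem_filter, Finset.mem_powerset] at ht
      simp only [hF, Finset.mem_filter, Finset.mem_univ, true_and, Y, decide_eq_true_eq]
      rw [Finset.sum_ite_mem, Finset.univ_inter, Finset.sum_const, smul_eq_mul, mul_one]
      exact ht.2
    · intro ω hω
      simp only [Finset.mem_filter, Finset.mem_powerset, Finset.subset_univ, true_and]
      simp only [hF, Finset.mem_filter, Finset.mem_univ, true_and, Y] at hω
      rw [Finset.card_filter, ← hω]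
    · intro t ht
      ext j
      simp
    · intro ω hω
      funext j
      by_cases h : ω j <;> simp [h]
    · intro t ht
      simp only [decide_eq_true_eq]
      rw [← Finset.prod_filter_mul_prod_filter_not Finset.univ (fun j => j ∈ t)]
      congr 1
      · rw [show Finset.univ.filter (fun j => j ∈ t) = t from by ext j; simp]
        exact (Finset.prod_congr rfl fun j hj => by simp [hj]).symm
      · rw [show Finset.univ.filter (fun j => ¬ j ∈ t) = Finset.univ \ t from by ext j; simp]
        exact (Finset.prod_congr rfl fun j hj => by
          simp only [Finset.mem_sdiff] at hj
          simp [hj.2]).symm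
end

section
/- For 0 < δ, the principal branch of the Lambert W function satisfies the Puiseux expansion W₀(−1/e + δ) = −1 + √(2eδ) + O(δ) as δ ↓ 0; in particular lim_{δ↓0} (W₀(−1/e+δ) + 1)/√(2eδ) = 1. -/
open Real Filter Set Asymptotics

set_option maxHeartbeats 1000000 in
/-- Puiseux expansion of the principal branch of the Lambert W function at the branch
point: `W₀(−1/e + δ) = −1 + √(2eδ) + O(δ)` as `δ ↓ 0`; in particular
`(W₀(−1/e+δ) + 1)/√(2eδ) → 1`. -/
theorem lambertW0_puiseux
    (W : ℝ → ℝ)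
    (hW : ∀ x : ℝ, -1 / Real.exp 1 < x →
      (-1 < W x ∧ W x * Real.exp (W x) = x)) :
    (fun δ : ℝ => W (-1 / Real.exp 1 + δ) + 1 - Real.sqrt (2 * Real.exp 1 * δ))
        =O[nhdsWithin 0 (Ioi (0 : ℝ))] (fun δ : ℝ => δ) ∧
    Tendsto (fun δ : ℝ => (W (-1 / Real.exp 1 + δ) + 1) / Real.sqrt (2 * Real.exp 1 * δ))
      (nhdsWithin 0 (Ioi (0 : ℝ))) (nhds 1) := by
  have he : (0:ℝ) < Real.exp 1 := Real.exp_pos 1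
  have key : ∀ᶠ δ : ℝ in nhdsWithin 0 (Ioi (0:ℝ)),
      0 ≤ Real.sqrt (2 * Real.exp 1 * δ) - (W (-1 / Real.exp 1 + δ) + 1) ∧
      Real.sqrt (2 * Real.exp 1 * δ) - (W (-1 / Real.exp 1 + δ) + 1) ≤ 2 * Real.exp 1 * δ := by
    have hmem : Ioo (0:ℝ) (Real.exp 1)⁻¹ ∈ nhdsWithin (0:ℝ) (Ioi (0:ℝ)) :=
      Ioo_mem_nhdsGT_of_mem ⟨le_refl 0, by positivity⟩
    filter_upwards [hmem] with δ hδ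
    obtain ⟨hδ0, hδ1⟩ := hδ
    have hx : -1 / Real.exp 1 < -1 / Real.exp 1 + δ := by linarith
    obtain ⟨hw1, hw2⟩ := hW _ hx
    set t := W (-1 / Real.exp 1 + δ) + 1 with ht_def
    have ht0 : 0 < t := by simp only [ht_def]; linarith
    have hq : (t - 1) * Real.exp t = -1 + Real.exp 1 * δ := by
      have hexpt : Real.exp t = Real.exp (W (-1 / Real.exp 1 + δ)) * Real.exp 1 := by
        rw [ht_def, Real.exp_add]
      have h1 : (t - 1) * Real.exp t
          = (W (-1 / Real.exp 1 + δ) * Real.exp (W (-1 / Real.exp 1 + δ))) * Real.exp 1 := by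
        rw [hexpt, ht_def]; ring
      rw [h1, hw2]
      field_simp
    clear_value t
    have hEδ : Real.exp 1 * δ < 1 := by
      have := (mul_lt_mul_of_pos_left hδ1 he)
      rwa [mul_inv_cancel₀ he.ne'] at this
    have ht1 : t < 1 := by
      by_contra h
      push_neg at h
      have h0 : 0 ≤ (t - 1) * Real.exp t :=
        mul_nonneg (by linarith) (Real.exp_pos t).le
      linarith [hq ▸ h0]
    -- Taylor bound for exp on [0,1]
    have habs : |t| ≤ 1 := by rw [abs_of_pos ht0]; linarith
    have hb := Real.exp_bound habs (by norm_num : 0 < 4)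
    have hsum : (∑ i ∈ Finset.range 4, t ^ i / (Nat.factorial i : ℝ))
        = 1 + t + t ^ 2 / 2 + t ^ 3 / 6 := by
      norm_num [Finset.sum_range_succ, Nat.factorial]
    rw [hsum, abs_of_pos ht0] at hb
    have hb' : |Real.exp t - (1 + t + t ^ 2 / 2 + t ^ 3 / 6)| ≤ t ^ 4 * (5 / 96) := by
      convert hb using 2
      norm_num [Nat.factorial]
    rw [abs_le] at hb'
    obtain ⟨hlb, hub⟩ := hb'
    have heq : (1 - t) * Real.exp t = 1 - Real.exp 1 * δ := by linear_combination -hq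
    have hub2 : (1 - t) * (Real.exp t - (1 + t + t ^ 2 / 2 + t ^ 3 / 6))
        ≤ (1 - t) * (t ^ 4 * (5 / 96)) :=
      mul_le_mul_of_nonneg_left hub (by linarith)
    have hlb2 : (1 - t) * (-(t ^ 4 * (5 / 96)))
        ≤ (1 - t) * (Real.exp t - (1 + t + t ^ 2 / 2 + t ^ 3 / 6)) :=
      mul_le_mul_of_nonneg_left hlb (by linarith)
    rw [mul_sub, heq] at hub2 hlb2
    -- bounds on E := exp 1 * δ
    have hA : t ^ 2 ≤ 2 * (Real.exp 1 * δ) := by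
      nlinarith [hub2, ht0, ht1, pow_nonneg ht0.le 3, pow_nonneg ht0.le 4,
        mul_nonneg (pow_nonneg ht0.le 4) ht0.le]
    have hB : 2 * (Real.exp 1 * δ) - t ^ 2 ≤ 2 * t ^ 3 := by
      nlinarith [hlb2, ht0, ht1, pow_nonneg ht0.le 3, pow_nonneg ht0.le 4,
        mul_nonneg (pow_nonneg ht0.le 3) (by linarith : (0:ℝ) ≤ 1 - t),
        mul_nonneg (pow_nonneg ht0.le 4) (by linarith : (0:ℝ) ≤ 1 - t)]
    set s := Real.sqrt (2 * Real.exp 1 * δ) with hs_def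
    have hs2 : s ^ 2 = 2 * Real.exp 1 * δ := Real.sq_sqrt (by positivity)
    have hst : t ≤ s := by
      have h1 : Real.sqrt (t ^ 2) ≤ s := Real.sqrt_le_sqrt (by linarith)
      rwa [Real.sqrt_sq ht0.le] at h1
    have hs_up : s ≤ t ^ 2 + t := by
      have h1 : Real.sqrt (2 * Real.exp 1 * δ) ≤ Real.sqrt ((t ^ 2 + t) ^ 2) :=
        Real.sqrt_le_sqrt (by nlinarith [sq_nonneg (t ^ 2)])
      rwa [Real.sqrt_sq (by positivity)] at h1
    refine ⟨by linarith, by linarith⟩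
  constructor
  · rw [Asymptotics.isBigO_iff]
    refine ⟨2 * Real.exp 1, ?_⟩
    filter_upwards [key, self_mem_nhdsWithin] with δ h hδ
    obtain ⟨h1, h2⟩ := h
    rw [Real.norm_eq_abs, Real.norm_eq_abs, abs_of_nonpos (by linarith),
      abs_of_pos (show (0:ℝ) < δ from hδ)]
    linarith
  · have hsqrt : Tendsto (fun δ : ℝ => Real.sqrt (2 * Real.exp 1 * δ))
        (nhdsWithin 0 (Ioi (0:ℝ))) (nhds 0) := by
      have hc : Continuous fun δ : ℝ => Real.sqrt (2 * Real.exp 1 * δ) := by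
        exact Real.continuous_sqrt.comp (continuous_const.mul continuous_id)
      have h0 : Tendsto (fun δ : ℝ => Real.sqrt (2 * Real.exp 1 * δ)) (nhds 0) (nhds 0) := by
        simpa using hc.tendsto 0
      exact h0.mono_left nhdsWithin_le_nhds
    have hlow : Tendsto (fun δ : ℝ => 1 - Real.sqrt (2 * Real.exp 1 * δ))
        (nhdsWithin 0 (Ioi (0:ℝ))) (nhds 1) := by
      simpa using (tendsto_const_nhds (x := (1:ℝ))).sub hsqrt
    refine tendsto_of_tendsto_of_tendsto_of_le_of_le' hlow tendsto_const_nhds ?_ ?_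
    · filter_upwards [key, self_mem_nhdsWithin] with δ h hδ
      obtain ⟨h1, h2⟩ := h
      have hδ0 : (0:ℝ) < δ := hδ
      have hspos : 0 < Real.sqrt (2 * Real.exp 1 * δ) :=
        Real.sqrt_pos.mpr (by positivity)
      have hs2 : (Real.sqrt (2 * Real.exp 1 * δ)) ^ 2 = 2 * Real.exp 1 * δ :=
        Real.sq_sqrt (by positivity)
      rw [le_div_iff₀ hspos]
      nlinarith
    · filter_upwards [key, self_mem_nhdsWithin] with δ h hδ
      obtain ⟨h1, h2⟩ := h
      have hδ0 : (0:ℝ) < δ := hδ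
      have hspos : 0 < Real.sqrt (2 * Real.exp 1 * δ) :=
        Real.sqrt_pos.mpr (by positivity)
      rw [div_le_one hspos]
      linarith
end

section
/- Fix θ > 0 and set ζ(z) = 1/θ + W₀(θ^{-1}(e^{−z} − 1)e^{−1/θ}) for real z, where W₀ is the principal branch of the Lambert W function. Then the argument θ^{-1}(e^{−z} − 1)e^{−1/θ} is strictly greater than −1/e for all real z, ζ(z) > 0, and ζ(z) solves the saddle point equation θ·ζ·e^{ζ+z} = 1 + e^{z}(e^{ζ} − 1). -/
open Real Filter Set

lemma wexp_mono : StrictMonoOn (fun w : ℝ => w * Real.exp w) (Set.Ici (-1 : ℝ)) := by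
  have h : ∀ x ∈ interior (Set.Ici (-1 : ℝ)),
      0 < deriv (fun w : ℝ => w * Real.exp w) x := by
    intro x hx
    rw [interior_Ici] at hx
    have : deriv (fun w : ℝ => w * Real.exp w) x = (x + 1) * Real.exp x := by
      have h1 : HasDerivAt (fun w : ℝ => w * Real.exp w)
          (1 * Real.exp x + x * Real.exp x) x :=
        (hasDerivAt_id x).mul (Real.hasDerivAt_exp x)
      rw [h1.deriv]; ring
    rw [this]
    have : (0:ℝ) < x + 1 := by linarith [hx.out]
    positivity
  exact strictMonoOn_of_deriv_pos (convex_Ici _)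
    (Continuous.continuousOn (by continuity)) h

lemma theta_exp (θ : ℝ) (hθ : 0 < θ) : Real.exp 1 ≤ θ * Real.exp (1 / θ) := by
  have h := Real.add_one_le_exp (1 / θ - 1)
  have h2 : Real.exp (1 / θ - 1) = Real.exp (1 / θ) / Real.exp 1 := by
    rw [Real.exp_sub]
  rw [h2] at h
  have hE : (0:ℝ) < Real.exp 1 := Real.exp_pos 1
  have : 1 / θ * Real.exp 1 ≤ Real.exp (1 / θ) := by
    calc 1 / θ * Real.exp 1 = (1 / θ - 1 + 1) * Real.exp 1 := by ring
    _ ≤ Real.exp (1 / θ) / Real.exp 1 * Real.exp 1 := by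
        apply mul_le_mul_of_nonneg_right h hE.le
    _ = Real.exp (1 / θ) := by field_simp
  calc Real.exp 1 = θ * (1 / θ * Real.exp 1) := by field_simp
  _ ≤ θ * Real.exp (1 / θ) := by nlinarith

/-- For `θ > 0` and `ζ(z) = 1/θ + W₀(θ⁻¹(e^{−z} − 1)e^{−1/θ})`, the argument of `W₀`
exceeds `−1/e`, `ζ(z) > 0`, and `ζ(z)` solves the saddle point equation
`θ ζ e^{ζ+z} = 1 + e^z (e^ζ − 1)`. -/
theorem saddle_point_solution
    (W : ℝ → ℝ)
    (hW : ∀ x : ℝ, -1 / Real.exp 1 < x →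
      (-1 < W x ∧ W x * Real.exp (W x) = x ∧
        ∀ w : ℝ, -1 < w → w * Real.exp w = x → w = W x))
    (θ : ℝ) (hθ : 0 < θ)
    (ζ : ℝ → ℝ)
    (hζ : ∀ z : ℝ, ζ z = 1 / θ + W (θ⁻¹ * (Real.exp (-z) - 1) * Real.exp (-1 / θ))) :
    ∀ z : ℝ,
      -1 / Real.exp 1 < θ⁻¹ * (Real.exp (-z) - 1) * Real.exp (-1 / θ) ∧
      0 < ζ z ∧
      θ * ζ z * Real.exp (ζ z + z) = 1 + Real.exp z * (Real.exp (ζ z) - 1) := by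
  intro z
  set x : ℝ := θ⁻¹ * (Real.exp (-z) - 1) * Real.exp (-1 / θ) with hx
  have hE1 : (0:ℝ) < Real.exp 1 := Real.exp_pos 1
  have hEt : (0:ℝ) < Real.exp (-1 / θ) := Real.exp_pos _
  have hEz : (0:ℝ) < Real.exp (-z) := Real.exp_pos _
  have hexpinv : Real.exp (-1 / θ) = (Real.exp (1 / θ))⁻¹ := by
    rw [← Real.exp_neg]; ring_nf
  -- key bound: x > -1/θ * exp(-1/θ)
  have hkey : -(1/θ) * Real.exp (-1/θ) < x := by
    have : x - (-(1/θ) * Real.exp (-1/θ)) = θ⁻¹ * Real.exp (-z) * Real.exp (-1/θ) := by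
      rw [hx]; field_simp; ring
    nlinarith [mul_pos (mul_pos (inv_pos.mpr hθ) hEz) hEt]
  -- -1/θ * exp(-1/θ) ≥ -1/e
  have hge : -1 / Real.exp 1 ≤ -(1/θ) * Real.exp (-1/θ) := by
    have ht := theta_exp θ hθ
    have hEp : (0:ℝ) < Real.exp (1/θ) := Real.exp_pos _
    have h3 : -(1/θ) * (Real.exp (1/θ))⁻¹ = -((θ * Real.exp (1/θ))⁻¹) := by
      rw [mul_inv]; ring
    rw [hexpinv, h3, neg_div, neg_le_neg_iff, one_div (Real.exp 1)]
    exact inv_anti₀ hE1 ht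
  have hxgt : -1 / Real.exp 1 < x := lt_of_le_of_lt hge hkey
  obtain ⟨hW1, hW2, _⟩ := hW x hxgt
  set w : ℝ := W x with hw
  -- show w > -1/θ
  have hwgt : -(1/θ) < w := by
    by_contra hcon
    push_neg at hcon
    have hm1 : (-1:ℝ) ≤ -(1/θ) := le_trans (by linarith) hcon
    have := wexp_mono.monotoneOn (Set.mem_Ici.mpr (by linarith : (-1:ℝ) ≤ w))
      (Set.mem_Ici.mpr hm1) hcon
    rw [hW2] at this
    have h3 : -(1/θ) * Real.exp (-(1/θ)) = -(1/θ) * Real.exp (-1/θ) := by ring_nf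
    rw [h3] at this
    linarith
  have hζpos : 0 < ζ z := by
    rw [hζ z, ← hw]
    linarith
  refine ⟨hxgt, hζpos, ?_⟩
  rw [hζ z, ← hw]
  have hwe : w * Real.exp w = x := hW2
  rw [hx, hexpinv] at hwe
  have hEzinv : Real.exp (-z) = (Real.exp z)⁻¹ := Real.exp_neg z
  rw [hEzinv] at hwe
  have hEzp : (0:ℝ) < Real.exp z := Real.exp_pos _
  have hEtp : (0:ℝ) < Real.exp (1/θ) := Real.exp_pos _
  rw [Real.exp_add, Real.exp_add]
  field_simp at hwe ⊢
  nlinarith [hwe, Real.exp_pos w, sq_nonneg (Real.exp z), mul_pos hEzp hEtp]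
end
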